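/- arXiv:2001.06167 — 6 statements merged into one kernel-verified Lean document; each statement's English description precedes it below -/
import Mathlib

section
/- Let m ≥ 1, n = 2m, and k ≥ 0 an integer. In ℝ^m with the standard inner product, set δ = (m−1/2, m−3/2, …, 1/2) (i.e. δ_i = m−i+1/2) and λ = (k+1/2, 1/2, …, 1/2) (first entry k+1/2, all other entries 1/2). Then the Weyl dimension product over the positive roots of B_m, namely ∏_{1≤i<j≤m} [⟨λ+δ, e_i−e_j⟩·⟨λ+δ, e_i+e_j⟩ / (⟨δ, e_i−e_j⟩·⟨δ, e_i+e_j⟩)] · ∏_{i=1}^{m} [⟨λ+δ, e_i⟩ / ⟨δ, e_i⟩], equals 2^m · C(k+n−1, k), where C denotes the binomial coefficient and e_1, …, e_m is the standard basis of ℝ^m. -/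
/-!
Index coordinates from `0` and group the positive roots of `B_m` by their smallest index `i`:
the roots `e_i - e_j`, `e_i + e_j` (`j > i`) and `e_i`. For `i ≥ 1` we have `(λ + δ)_i = m - i`
and `δ_i = m - i - 1/2`, so the pair factors are `(2m - i - j) / (2m - i - j - 1)`; they
telescope, and together with `(m - i) / (m - i - 1/2)` the row contributes exactly `2`.
For `i = 0` the numerators `⟨λ + δ, α⟩` run through `k + 1, …, k + 2m - 1` and the denominators
`⟨δ, α⟩` through `1, …, 2m - 1`, except that `⟨δ, e_0⟩ = (2m - 1) / 2`; this row gives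
`2 · C(k + 2m - 1, k)`.
-/

open Finset

theorem Fin.prod_prod_ite_lt_eq_prod_range {M : Type*} [CommMonoid M] (m : ℕ) (q : ℕ → ℕ → M) :
    ∏ i : Fin m, ∏ j : Fin m, (if i < j then q i j else 1) =
      ∏ i ∈ range m, ∏ t ∈ range (m - 1 - i), q i (i + 1 + t) := by
  rw [← Fin.prod_univ_eq_prod_range (fun i => ∏ t ∈ range (m - 1 - i), q i (i + 1 + t))]
  refine prod_congr rfl fun i _ => ?_
  have hIco : (range m).filter (fun j => (i : ℕ) < j) = Ico ((i : ℕ) + 1) m := by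
    ext j
    simp only [mem_filter, mem_range, mem_Ico]
    omega
  simp_rw [Fin.lt_def]
  rw [Fin.prod_univ_eq_prod_range (fun j => if (i : ℕ) < j then q i j else 1) m,
    prod_ite, prod_const_one, mul_one, hIco, prod_Ico_eq_prod_range, Nat.sub_sub, add_comm 1]

theorem Finset.prod_range_succ_sub_reflect {R : Type*} [CommRing R] (b : R) (n : ℕ) :
    ∏ t ∈ range (n + 1), (b - t) = ∏ t ∈ range (n + 1), (b - n + t) := by
  rw [← prod_range_reflect (fun t : ℕ => b - n + t)]
  refine prod_congr rfl fun t ht => ?_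
  rw [add_tsub_cancel_right, Nat.cast_sub (Nat.lt_succ_iff.1 (mem_range.1 ht))]
  ring

theorem Finset.prod_range_two_mul_add_one {R : Type*} [CommRing R] (c : R) (s : ℕ) :
    ∏ t ∈ range (2 * s + 1), (c + t) =
      (∏ t ∈ range s, (c + t)) * ∏ t ∈ range (s + 1), (c + s + t) := by
  rw [two_mul, add_assoc, prod_range_add]
  push_cast
  simp only [add_assoc]

theorem Finset.prod_range_div_sub_one_telescope (a : ℝ) (L : ℕ) (hL : (L : ℝ) < a) :
    ∏ t ∈ range L, (a - t) / (a - t - 1) = a / (a - L) := by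
  induction L with
  | zero => simp [(Nat.cast_zero (R := ℝ) ▸ hL).ne']
  | succ L ih =>
    push_cast at hL ⊢
    rw [prod_range_succ, ih (by linarith), div_mul_div_cancel₀ (by linarith), sub_add_eq_sub_sub]

theorem Nat.cast_add_choose_eq_prod_div {K : Type*} [Field K] [CharZero K] (k n : ℕ) :
    ((k + n).choose k : K) = (∏ t ∈ range n, (k + 1 + t : K)) / ∏ t ∈ range n, (1 + t : K) := by
  have h := congrArg (Nat.cast (R := K)) (Nat.ascFactorial_eq_factorial_mul_choose k n)
  rw [← Nat.choose_symm_add, Nat.ascFactorial_eq_prod_range,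
    ← prod_range_add_one_eq_factorial] at h
  push_cast at h
  have hcomm : ∏ t ∈ range n, (1 + t : K) = ∏ t ∈ range n, ((t : K) + 1) :=
    prod_congr rfl fun _ _ => add_comm _ _
  rw [hcomm, eq_div_iff (prod_ne_zero_iff.2 fun t _ => Nat.cast_add_one_ne_zero t), mul_comm, h]

namespace TypeBWeyl

noncomputable section

/-- `rho m i` is the coordinate `δ_{i+1}` of the paper: indices start at `0`. -/
def rho (m i : ℕ) : ℝ := m - i - 1 / 2

def weight (k i : ℕ) : ℝ := if i = 0 then k + 1 / 2 else 1 / 2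

def shifted (m k i : ℕ) : ℝ := weight k i + rho m i

def pairFactor (m k i j : ℕ) : ℝ :=
  ((shifted m k i - shifted m k j) * (shifted m k i + shifted m k j)) /
    ((rho m i - rho m j) * (rho m i + rho m j))

/-- The contribution of the roots `e_i ± e_j` (`i < j < m`) and `e_i` to the Weyl product. -/
def rowFactor (m k i : ℕ) : ℝ :=
  (∏ t ∈ range (m - 1 - i), pairFactor m k i (i + 1 + t)) * (shifted m k i / rho m i)

end

variable {m k i j : ℕ}

theorem shifted_zero : shifted m k 0 = k + m := by
  simp only [shifted, weight, rho, if_pos]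
  push_cast
  ring

theorem shifted_of_ne_zero (hi : i ≠ 0) : shifted m k i = m - i := by
  simp only [shifted, weight, rho, if_neg hi]
  ring

theorem pairFactor_zero_left (hj : j ≠ 0) :
    pairFactor m k 0 j = ((k + j) * (k + 2 * m - j)) / (j * (2 * m - 1 - j)) := by
  rw [pairFactor, shifted_zero, shifted_of_ne_zero hj]
  simp only [rho]
  congr 1 <;> push_cast <;> ring

theorem pairFactor_of_ne_zero (hi : i ≠ 0) (hj : j ≠ 0) (hij : i ≠ j) :
    pairFactor m k i j = (2 * m - i - j) / (2 * m - i - j - 1) := by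
  have hji : (j : ℝ) - i ≠ 0 := sub_ne_zero.2 (by exact_mod_cast hij.symm)
  rw [pairFactor, shifted_of_ne_zero hi, shifted_of_ne_zero hj]
  simp only [rho]
  rw [← mul_div_mul_left (2 * m - i - j : ℝ) _ hji]
  congr 1 <;> ring

theorem rowFactor_of_ne_zero (hi : i ≠ 0) (him : i < m) : rowFactor m k i = 2 := by
  have hpair : ∀ t ∈ range (m - 1 - i), pairFactor m k i (i + 1 + t) =
      ((2 * m - 2 * i - 1 : ℝ) - t) / ((2 * m - 2 * i - 1 : ℝ) - t - 1) := fun t _ => by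
    rw [pairFactor_of_ne_zero hi (by omega) (by omega)]
    push_cast
    congr 1 <;> ring
  have hlen : ((m - 1 - i : ℕ) : ℝ) = m - 1 - i := by
    rw [Nat.cast_sub (by omega), Nat.cast_sub (by omega), Nat.cast_one]
  have hgap : (i : ℝ) + 1 ≤ m := by exact_mod_cast him
  rw [rowFactor, prod_congr rfl hpair, prod_range_div_sub_one_telescope _ _ (by linarith),
    shifted_of_ne_zero hi, rho, hlen, show (2 * m - 2 * i - 1 : ℝ) - (m - 1 - i) = m - i by ring,
    div_mul_div_cancel₀ (by linarith), div_eq_iff (by linarith)]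
  ring

theorem rowFactor_zero (s : ℕ) : rowFactor (s + 1) k 0 = 2 * (k + (2 * s + 1)).choose k := by
  have hpair : ∀ t ∈ range s, pairFactor (s + 1) k 0 (0 + 1 + t) =
      ((k + 1 + t) * (k + 1 + 2 * s - t)) / ((1 + t) * (2 * s - t)) := fun t _ => by
    rw [pairFactor_zero_left (by omega)]
    push_cast
    congr 1 <;> ring
  have hnum : (k + 1 + s) * ∏ t ∈ range s, (k + 1 + 2 * s - t : ℝ) =
      ∏ t ∈ range (s + 1), (k + 1 + s + t : ℝ) :=
    calc (k + 1 + s) * ∏ t ∈ range s, (k + 1 + 2 * s - t : ℝ)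
        = ∏ t ∈ range (s + 1), (k + 1 + 2 * s - t : ℝ) := by rw [prod_range_succ]; ring
      _ = ∏ t ∈ range (s + 1), (k + 1 + s + t : ℝ) := by
        rw [prod_range_succ_sub_reflect]
        exact prod_congr rfl fun t _ => by ring
  have hden : (2 * s + 1) * ∏ t ∈ range s, (2 * s - t : ℝ) =
      ∏ t ∈ range (s + 1), (1 + s + t : ℝ) :=
    calc (2 * s + 1) * ∏ t ∈ range s, (2 * s - t : ℝ)
        = ∏ t ∈ range (s + 1), (2 * s + 1 - t : ℝ) := by
          rw [prod_range_succ', mul_comm]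
          push_cast
          simp only [sub_zero, add_sub_add_right_eq_sub]
      _ = ∏ t ∈ range (s + 1), (1 + s + t : ℝ) := by
        rw [prod_range_succ_sub_reflect]
        exact prod_congr rfl fun t _ => by ring
  have hE : ∏ t ∈ range s, (2 * s - t : ℝ) ≠ 0 :=
    right_ne_zero_of_mul (hden ▸ (prod_pos fun t _ => by positivity).ne')
  have hD : ∏ t ∈ range s, (1 + t : ℝ) ≠ 0 := (prod_pos fun t _ => by positivity).ne'
  have hs : (2 * s + 1 : ℝ) ≠ 0 := by positivity
  rw [rowFactor, show s + 1 - 1 - 0 = s by omega, prod_congr rfl hpair, prod_div_distrib,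
    prod_mul_distrib, prod_mul_distrib, shifted_zero, rho, Nat.cast_add_choose_eq_prod_div,
    prod_range_two_mul_add_one, prod_range_two_mul_add_one, ← hnum, ← hden,
    show ((s + 1 : ℕ) : ℝ) - (0 : ℕ) - 1 / 2 = (2 * s + 1) / 2 by push_cast; ring]
  push_cast
  field_simp
  ring

theorem prod_range_rowFactor (hm : 1 ≤ m) :
    ∏ i ∈ range m, rowFactor m k i = 2 ^ m * (k + 2 * m - 1).choose k := by
  obtain ⟨s, rfl⟩ : ∃ s, m = s + 1 := ⟨m - 1, by omega⟩
  rw [prod_range_succ', rowFactor_zero,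
    prod_congr rfl fun i hi => rowFactor_of_ne_zero i.succ_ne_zero (by rw [mem_range] at hi; omega),
    prod_const, card_range, show k + 2 * (s + 1) - 1 = k + (2 * s + 1) by omega, pow_succ]
  ring

end TypeBWeyl

/-- Weyl dimension formula for `so(2m+1)` (type `B_m`) with highest weight
`λ = (k+1/2, (1/2)_{m-1})` and `δ = (m-1/2, m-3/2, …, 1/2)`: the product over the
positive roots `e_i ± e_j (i < j)` and `e_i` equals `2^m · C(k+n-1, k)` with `n = 2m`. -/
theorem sphere_multiplicity_imP_even (m k : ℕ) (hm : 1 ≤ m) :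
    let δ : Fin m → ℝ := fun i => (m : ℝ) - (i : ℕ) - 1 / 2
    let lam : Fin m → ℝ := fun i => if (i : ℕ) = 0 then (k : ℝ) + 1 / 2 else 1 / 2
    let f : Fin m → ℝ := fun i => lam i + δ i
    (∏ i, ∏ j, if i < j then
        ((f i - f j) * (f i + f j)) / ((δ i - δ j) * (δ i + δ j)) else 1)
      * (∏ i, f i / δ i)
      = 2 ^ m * (Nat.choose (k + 2 * m - 1) k : ℝ) := by
  intro δ lam f
  change (∏ i : Fin m, ∏ j : Fin m, if i < j then TypeBWeyl.pairFactor m k i j else 1) *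
      ∏ i : Fin m, TypeBWeyl.shifted m k i / TypeBWeyl.rho m i = _
  rw [Fin.prod_prod_ite_lt_eq_prod_range,
    Fin.prod_univ_eq_prod_range (fun i => TypeBWeyl.shifted m k i / TypeBWeyl.rho m i),
    ← prod_mul_distrib]
  exact TypeBWeyl.prod_range_rowFactor hm
end

section
/- Let m ≥ 2, n = 2m−1, k ≥ 0 an integer, and σ ∈ {+1, −1}. In ℝ^m with the standard inner product, set δ = (m−1, m−2, …, 1, 0) (i.e. δ_i = m−i) and λ = (k+1/2, 1/2, …, 1/2, σ·1/2) (first entry k+1/2, entries 2 through m−1 equal to 1/2, last entry σ/2). Then the Weyl dimension product over the positive roots of D_m, namely ∏_{1≤i<j≤m} [⟨λ+δ, e_i−e_j⟩·⟨λ+δ, e_i+e_j⟩ / (⟨δ, e_i−e_j⟩·⟨δ, e_i+e_j⟩)], equals 2^{m−1} · C(k+n−1, k), where C denotes the binomial coefficient and e_1, …, e_m is the standard basis of ℝ^m. -/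
/-! Only the squares of the entries of `λ + δ` enter the Weyl product, so the last entry
`σ/2` may be replaced by `1/2`. Splitting off the roots `e₁ ± eⱼ` then reduces `D_m` to
`D_{m-1}` with `λ = (1/2, …, 1/2)`, the case `k = 0`. With `p = m - 1`, the split-off factors are
`(k+1+j)(k+2p-j) / ((j+1)(2p-1-j))` for `j < p`: the numerators run once through
`k+1, …, k+2p` and the denominators multiply to `(2p)!/2`, so they contribute `2·C(k+2p, k)`,
and induction on `m` gives `2^(m-1)·C(k+2m-2, k)`. -/

open Finset
open scoped Nat

theorem Nat.prod_range_mul_sub_eq_ascFactorial (a n : ℕ) :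
    ∏ j ∈ range n, (a + 1 + j) * (a + 2 * n - j) = (a + 1).ascFactorial (2 * n) := by
  have reflect : ∏ j ∈ range n, (a + 2 * n - j) = ∏ j ∈ range n, (a + 1 + (n + j)) := by
    rw [← prod_range_reflect]
    exact prod_congr rfl fun j hj => by rw [mem_range] at hj; omega
  rw [prod_mul_distrib, reflect, ascFactorial_eq_prod_range, two_mul, prod_range_add]

theorem Nat.two_mul_prod_range_mul_sub_eq_factorial {n : ℕ} (hn : 0 < n) :
    2 * ∏ j ∈ range n, (j + 1) * (2 * n - (j + 1)) = (2 * n)! := by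
  obtain ⟨n, rfl⟩ : ∃ n', n = n' + 1 := ⟨n - 1, by omega⟩
  have reflect : ∏ j ∈ range (n + 1), (2 * (n + 1) - (j + 1)) = (n + 1).ascFactorial (n + 1) := by
    rw [← prod_range_reflect, ascFactorial_eq_prod_range]
    exact prod_congr rfl fun j hj => by rw [mem_range] at hj; omega
  rw [prod_mul_distrib, prod_range_add_one_eq_factorial, reflect, factorial_succ,
    show 2 * (n + 1) = (2 * n + 1) + 1 by ring, factorial_succ,
    show 2 * n + 1 = n + (n + 1) by ring, ← factorial_mul_ascFactorial n (n + 1)]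
  ring

theorem prod_range_first_row_eq_two_mul_choose {K : Type*} [Field K] [CharZero K] (k : ℕ) {n : ℕ}
    (hn : 0 < n) :
    ∏ j ∈ range n, ((k : K) + 1 + j) * (k + 2 * n - j) / ((j + 1) * (2 * n - 1 - j))
      = 2 * ((k + 2 * n).choose k : K) := by
  have num : ∏ j ∈ range n, ((k : K) + 1 + j) * (k + 2 * n - j)
      = (2 * n)! * ((k + 2 * n).choose k : K) := by
    rw [Nat.choose_symm_add, ← Nat.cast_mul, ← Nat.ascFactorial_eq_factorial_mul_choose,
      ← Nat.prod_range_mul_sub_eq_ascFactorial]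
    push_cast
    exact prod_congr rfl fun j hj => by
      rw [mem_range] at hj; rw [Nat.cast_sub (by omega)]; push_cast; ring
  have den : 2 * ∏ j ∈ range n, ((j : K) + 1) * (2 * n - 1 - j) = (2 * n)! := by
    rw [← Nat.two_mul_prod_range_mul_sub_eq_factorial hn]
    push_cast
    congr 1
    exact prod_congr rfl fun j hj => by
      rw [mem_range] at hj; rw [Nat.cast_sub (by omega)]; push_cast; ring
  have den_ne : ∏ j ∈ range n, ((j : K) + 1) * (2 * n - 1 - j) ≠ 0 := by
    intro h
    rw [h, mul_zero] at den
    exact (Nat.cast_ne_zero.mpr (Nat.factorial_ne_zero _)) den.symm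
  rw [prod_div_distrib, div_eq_iff den_ne, num, ← den]
  ring

section WeylRatio

variable {K : Type*} [Field K]

def weylRatio {m : ℕ} (f δ : Fin m → K) : K :=
  ∏ i, ∏ j, if i < j then ((f i - f j) * (f i + f j)) / ((δ i - δ j) * (δ i + δ j)) else 1

theorem weylRatio_congr_sq {m : ℕ} {f g : Fin m → K} (δ : Fin m → K)
    (h : ∀ i, f i ^ 2 = g i ^ 2) : weylRatio f δ = weylRatio g δ := by
  have sq_diff : ∀ i j, (f i - f j) * (f i + f j) = (g i - g j) * (g i + g j) := fun i j => by
    linear_combination h i - h j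
  simp only [weylRatio, sq_diff]

theorem weylRatio_succ {n : ℕ} (f δ : Fin (n + 1) → K) :
    weylRatio f δ
      = (∏ j : Fin n, ((f 0 - f j.succ) * (f 0 + f j.succ)) / ((δ 0 - δ j.succ) * (δ 0 + δ j.succ)))
        * weylRatio (fun i => f i.succ) (fun i => δ i.succ) := by
  simp only [weylRatio, Fin.prod_univ_succ, if_false, one_mul, Fin.succ_pos, if_true,
    Fin.succ_lt_succ_iff, Fin.not_lt_zero]

end WeylRatio

noncomputable section

def weylVector (n : ℕ) : Fin n → ℝ := fun i => (n : ℝ) - 1 - (i : ℕ)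

def highestWeight (k n : ℕ) : Fin n → ℝ := fun i => 1 / 2 + if (i : ℕ) = 0 then (k : ℝ) else 0

end

theorem weylVector_succ (n : ℕ) : (fun i : Fin n => weylVector (n + 1) i.succ) = weylVector n := by
  funext i
  simp only [weylVector, Fin.val_succ, Nat.cast_add, Nat.cast_one]
  ring

theorem highestWeight_add_weylVector_succ (k n : ℕ) :
    (fun i : Fin n => (highestWeight k (n + 1) + weylVector (n + 1)) i.succ)
      = highestWeight 0 n + weylVector n := by
  rw [← weylVector_succ n]
  funext i
  simp [highestWeight]

theorem weylRatio_highestWeight_succ (k : ℕ) {n : ℕ} (hn : 0 < n) :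
    weylRatio (highestWeight k (n + 1) + weylVector (n + 1)) (weylVector (n + 1))
      = 2 * ((k + 2 * n).choose k : ℝ) * weylRatio (highestWeight 0 n + weylVector n) (weylVector n) := by
  rw [weylRatio_succ, weylVector_succ, highestWeight_add_weylVector_succ,
    ← prod_range_first_row_eq_two_mul_choose k hn, ← Fin.prod_univ_eq_prod_range]
  congr 1
  refine Fintype.prod_congr _ _ fun j => ?_
  simp only [Pi.add_apply, highestWeight, weylVector, Fin.val_zero, Fin.val_succ,
    Nat.succ_ne_zero, if_true, if_false]
  push_cast
  congr 1 <;> ring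

theorem weylRatio_highestWeight (k n : ℕ) :
    weylRatio (highestWeight k (n + 1) + weylVector (n + 1)) (weylVector (n + 1))
      = 2 ^ n * ((k + 2 * n).choose k : ℝ) := by
  induction n generalizing k with
  | zero => simp [weylRatio]
  | succ n ih =>
    rw [weylRatio_highestWeight_succ k n.succ_pos, ih, Nat.choose_zero_right]
    push_cast
    ring

/-- Weyl dimension formula for `so(2m)` (type `D_m`) with highest weight
`λ = (k+1/2, (1/2)_{m-2}, ±1/2)` and `δ = (m-1, m-2, …, 0)`: the product over the
positive roots `e_i ± e_j (i < j)` equals `2^{m-1} · C(k+n-1, k)` with `n = 2m-1`. -/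
theorem sphere_multiplicity_imP_odd (m k : ℕ) (hm : 2 ≤ m) (σ : ℝ) (hσ : σ = 1 ∨ σ = -1) :
    let δ : Fin m → ℝ := fun i => (m : ℝ) - 1 - (i : ℕ)
    let lam : Fin m → ℝ := fun i =>
      if (i : ℕ) = 0 then (k : ℝ) + 1 / 2
      else if (i : ℕ) = m - 1 then σ / 2
      else 1 / 2
    let f : Fin m → ℝ := fun i => lam i + δ i
    (∏ i, ∏ j, if i < j then
        ((f i - f j) * (f i + f j)) / ((δ i - δ j) * (δ i + δ j)) else 1)
      = 2 ^ (m - 1) * (Nat.choose (k + 2 * m - 2) k : ℝ) := by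
  intro δ lam f
  obtain ⟨n, rfl⟩ : ∃ n, m = n + 1 := ⟨m - 1, by omega⟩
  have f_sq : ∀ i, f i ^ 2 = (highestWeight k (n + 1) + weylVector (n + 1)) i ^ 2 := by
    intro i
    have hσ2 : σ ^ 2 = 1 := by rcases hσ with rfl | rfl <;> norm_num
    simp only [f, lam, δ, Pi.add_apply, highestWeight, weylVector]
    split_ifs with first last
    · ring
    · have i_eq : ((i : ℕ) : ℝ) = n := by exact_mod_cast (show (i : ℕ) = n by omega)
      push_cast
      rw [i_eq]
      linear_combination hσ2 / 4
    · ring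
  change weylRatio f (weylVector (n + 1)) = _
  rw [weylRatio_congr_sq _ f_sq, weylRatio_highestWeight,
    show k + 2 * (n + 1) - 2 = k + 2 * n by omega, Nat.add_sub_cancel]
end

section
/- Let m ≥ 2, n = 2m, and l ≥ 0 an integer. In ℝ^m with the standard inner product, set δ = (m−1/2, m−3/2, …, 1/2) (i.e. δ_i = m−i+1/2) and λ = (l+3/2, 3/2, 1/2, …, 1/2) (first entry l+3/2, second entry 3/2, remaining m−2 entries 1/2). Then the Weyl dimension product over the positive roots of B_m, namely ∏_{1≤i<j≤m} [⟨λ+δ, e_i−e_j⟩·⟨λ+δ, e_i+e_j⟩ / (⟨δ, e_i−e_j⟩·⟨δ, e_i+e_j⟩)] · ∏_{i=1}^{m} [⟨λ+δ, e_i⟩ / ⟨δ, e_i⟩], equals 2^m · (n−2) · [(l+n+1)(l+1) / ((l+n)(l+2))] · C(l+n, l+1), where C denotes the binomial coefficient and e_1, …, e_m is the standard basis of ℝ^m. -/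
/-!
Write `W(x) = ∏_{i<j} (x_i - x_j)(x_i + x_j) · ∏_i x_i`, so that the Weyl product is
`W(λ + δ) / W(δ)`. Peeling off the first coordinate gives `W(a, x) = a ∏_j (a² - x_j²) · W(x)`,
and for the staircases `δ_p = (p - 1/2, …, 1/2)` and `σ_p = (p, …, 1)` the row factor is a falling
factorial. Here `λ + δ = (l + m + 1, m, σ_{m-2})`, and `W(σ_p) = 2^p W(δ_p)` (the spin
representation of `B_p` has dimension `2^p`), so both products reduce to factorials.
-/

open Finset Nat Polynomial

noncomputable def weylProductB {m : ℕ} (x : Fin m → ℝ) : ℝ :=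
  (∏ i, ∏ j, if i < j then (x i - x j) * (x i + x j) else 1) * ∏ i, x i

noncomputable def rhoB (m : ℕ) : Fin m → ℝ := fun i => (m : ℝ) - (i : ℕ) - 1 / 2

/-- `rhoB m` shifted by `(1/2, …, 1/2)`, the highest weight of the spin representation. -/
noncomputable def spinRhoB (m : ℕ) : Fin m → ℝ := fun i => (m : ℝ) - (i : ℕ)

theorem weylProductB_cons {m : ℕ} (a : ℝ) (x : Fin m → ℝ) :
    weylProductB (Fin.cons a x : Fin (m + 1) → ℝ)
      = a * (∏ j, (a - x j) * (a + x j)) * weylProductB x := by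
  simp only [weylProductB, Fin.prod_univ_succ, Fin.cons_zero, Fin.cons_succ, if_false,
    Fin.succ_pos, if_true, Fin.succ_lt_succ_iff, Fin.not_lt_zero, one_mul]
  ring

theorem prod_ratio_eq_div_weylProductB {m : ℕ} (x y : Fin m → ℝ) :
    (∏ i, ∏ j, if i < j then ((x i - x j) * (x i + x j)) / ((y i - y j) * (y i + y j)) else 1)
      * (∏ i, x i / y i) = weylProductB x / weylProductB y := by
  have hite : ∀ i j : Fin m,
      (if i < j then ((x i - x j) * (x i + x j)) / ((y i - y j) * (y i + y j)) else 1)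
        = (if i < j then (x i - x j) * (x i + x j) else 1)
          / (if i < j then (y i - y j) * (y i + y j) else 1) := by
    intro i j
    split_ifs <;> simp
  simp only [hite, prod_div_distrib, weylProductB]
  rw [mul_div_mul_comm]

theorem rhoB_succ (p : ℕ) : rhoB (p + 1) = Fin.cons ((p : ℝ) + 1 / 2) (rhoB p) := by
  ext i
  refine Fin.cases ?_ (fun j => ?_) i
  · rw [Fin.cons_zero, rhoB, Fin.val_zero]; push_cast; ring
  · rw [Fin.cons_succ, rhoB, rhoB, Fin.val_succ]; push_cast; ring

theorem spinRhoB_succ (p : ℕ) : spinRhoB (p + 1) = Fin.cons ((p : ℝ) + 1) (spinRhoB p) := by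
  ext i
  refine Fin.cases ?_ (fun j => ?_) i
  · rw [Fin.cons_zero, spinRhoB, Fin.val_zero]; push_cast; ring
  · rw [Fin.cons_succ, spinRhoB, spinRhoB, Fin.val_succ]; push_cast; ring

theorem descPochhammer_eval_add_two {n : ℕ} (r : ℝ) :
    (descPochhammer ℝ (n + 2)).eval (r + 1) = (r + 1) * (descPochhammer ℝ n).eval r * (r - n) := by
  rw [descPochhammer_succ_left, eval_mul, eval_X, eval_comp, eval_sub, eval_X, eval_one,
    add_sub_cancel_right, descPochhammer_succ_eval, mul_assoc]

theorem mul_prod_sub_mul_add_spinRhoB (p : ℕ) (a : ℝ) :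
    a * ∏ j, (a - spinRhoB p j) * (a + spinRhoB p j)
      = (descPochhammer ℝ (2 * p + 1)).eval (a + p) := by
  induction p with
  | zero => simp
  | succ p ih =>
    rw [spinRhoB_succ, Fin.prod_univ_succ]
    simp only [Fin.cons_zero, Fin.cons_succ]
    rw [show 2 * (p + 1) + 1 = 2 * p + 1 + 2 by ring,
      show a + ((p + 1 : ℕ) : ℝ) = (a + p) + 1 by push_cast; ring, descPochhammer_eval_add_two, ← ih]
    push_cast
    ring

theorem prod_sub_mul_add_rhoB (p : ℕ) (a : ℝ) :
    ∏ j, (a - rhoB p j) * (a + rhoB p j) = (descPochhammer ℝ (2 * p)).eval (a + p - 1 / 2) := by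
  induction p with
  | zero => simp
  | succ p ih =>
    rw [rhoB_succ, Fin.prod_univ_succ]
    simp only [Fin.cons_zero, Fin.cons_succ]
    rw [show 2 * (p + 1) = 2 * p + 2 by ring,
      show a + ((p + 1 : ℕ) : ℝ) - 1 / 2 = (a + p - 1 / 2) + 1 by push_cast; ring,
      descPochhammer_eval_add_two, ← ih]
    push_cast
    ring

theorem weylProductB_rhoB_succ (p : ℕ) :
    weylProductB (rhoB (p + 1)) = ((p : ℝ) + 1 / 2) * (2 * p)! * weylProductB (rhoB p) := by
  rw [rhoB_succ, weylProductB_cons, prod_sub_mul_add_rhoB,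
    show (p : ℝ) + 1 / 2 + p - 1 / 2 = ((2 * p : ℕ) : ℝ) by push_cast; ring,
    descPochhammer_eval_eq_descFactorial, descFactorial_self]

theorem weylProductB_rhoB_pos (p : ℕ) : 0 < weylProductB (rhoB p) := by
  induction p with
  | zero => simp [weylProductB]
  | succ p ih =>
    rw [weylProductB_rhoB_succ]
    have := (2 * p).factorial_pos
    positivity

theorem weylProductB_spinRhoB (p : ℕ) :
    weylProductB (spinRhoB p) = 2 ^ p * weylProductB (rhoB p) := by
  induction p with
  | zero => simp [weylProductB]
  | succ p ih =>
    have hrow : ((p : ℝ) + 1) * ∏ j, ((p + 1) - spinRhoB p j) * ((p + 1) + spinRhoB p j)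
        = (2 * p + 1)! := by
      rw [mul_prod_sub_mul_add_spinRhoB, show (p : ℝ) + 1 + p = ((2 * p + 1 : ℕ) : ℝ) by
        push_cast; ring, descPochhammer_eval_eq_descFactorial, descFactorial_self]
    rw [spinRhoB_succ, weylProductB_cons, hrow, ih, weylProductB_rhoB_succ, factorial_succ]
    push_cast
    ring

theorem weylProductB_cons_cons_spinRhoB (p : ℕ) (a b : ℝ) :
    weylProductB (Fin.cons a (Fin.cons b (spinRhoB p)) : Fin (p + 2) → ℝ)
      = (a - b) * (a + b) * (descPochhammer ℝ (2 * p + 1)).eval (a + p)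
        * (descPochhammer ℝ (2 * p + 1)).eval (b + p) * 2 ^ p * weylProductB (rhoB p) := by
  rw [weylProductB_cons, weylProductB_cons, Fin.prod_univ_succ, weylProductB_spinRhoB,
    ← mul_prod_sub_mul_add_spinRhoB, ← mul_prod_sub_mul_add_spinRhoB]
  simp only [Fin.cons_zero, Fin.cons_succ]
  ring

theorem weylProductB_cons_cons_spinRhoB_div_rhoB (l p : ℕ) :
    weylProductB (Fin.cons ((l + p + 3 : ℕ) : ℝ) (Fin.cons ((p + 2 : ℕ) : ℝ) (spinRhoB p)) :
        Fin (p + 2) → ℝ) / weylProductB (rhoB (p + 2))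
      = 2 ^ (p + 2) * (2 * p + 2) * ((l + 2 * p + 5) * (l + 1) / ((l + 2 * p + 4) * (l + 2)))
        * ((l + 2 * (p + 2)).choose (l + 1) : ℝ) := by
  rw [weylProductB_cons_cons_spinRhoB, weylProductB_rhoB_succ, weylProductB_rhoB_succ,
    show ((l + p + 3 : ℕ) : ℝ) + p = ((l + 2 * p + 3 : ℕ) : ℝ) by push_cast; ring,
    show ((p + 2 : ℕ) : ℝ) + p = ((2 * p + 2 : ℕ) : ℝ) by push_cast; ring,
    descPochhammer_eval_eq_descFactorial, descPochhammer_eval_eq_descFactorial,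
    cast_choose ℝ (by omega : l + 1 ≤ l + 2 * (p + 2))]
  have hD₁ : ((l + 2 * p + 3).descFactorial (2 * p + 1) : ℝ)
      = (l + 2 * p + 3)! / (l + 1 + 1)! := by
    rw [eq_div_iff (by positivity), mul_comm,
      ← show l + 2 * p + 3 - (2 * p + 1) = l + 1 + 1 by omega]
    exact_mod_cast factorial_mul_descFactorial (by omega)
  have hD₂ := factorial_mul_descFactorial (by omega : 2 * p + 1 ≤ 2 * p + 2)
  rw [show 2 * p + 2 - (2 * p + 1) = 1 by omega, factorial_one, one_mul] at hD₂
  rw [hD₂, show l + 2 * (p + 2) - (l + 1) = 2 * p + 1 + 1 + 1 by omega,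
    show l + 2 * (p + 2) = l + 2 * p + 3 + 1 by omega, show 2 * (p + 1) = 2 * p + 1 + 1 by omega]
  push_cast [hD₁, factorial_succ]
  have hW := (weylProductB_rhoB_pos p).ne'
  field_simp
  ring

/-- Weyl dimension formula for `so(2m+1)` (type `B_m`) with highest weight
`λ = (l+3/2, 3/2, (1/2)_{m-2})` and `δ = (m-1/2, m-3/2, …, 1/2)`: the product over the
positive roots equals `2^m · (n-2) · ((l+n+1)(l+1)/((l+n)(l+2))) · C(l+n, l+1)`
with `n = 2m`. -/
theorem sphere_multiplicity_kerPstar_even (m l : ℕ) (hm : 2 ≤ m) :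
    let n : ℝ := 2 * m
    let δ : Fin m → ℝ := fun i => (m : ℝ) - (i : ℕ) - 1 / 2
    let lam : Fin m → ℝ := fun i =>
      if (i : ℕ) = 0 then (l : ℝ) + 3 / 2
      else if (i : ℕ) = 1 then 3 / 2
      else 1 / 2
    let f : Fin m → ℝ := fun i => lam i + δ i
    (∏ i, ∏ j, if i < j then
        ((f i - f j) * (f i + f j)) / ((δ i - δ j) * (δ i + δ j)) else 1)
      * (∏ i, f i / δ i)
      = 2 ^ m * (n - 2) * (((l : ℝ) + n + 1) * ((l : ℝ) + 1) / ((((l : ℝ) + n)) * ((l : ℝ) + 2)))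
        * (Nat.choose (l + 2 * m) (l + 1) : ℝ) := by
  intro n δ lam f
  obtain ⟨p, rfl⟩ : ∃ p, m = p + 2 := ⟨m - 2, by omega⟩
  have hf : f = Fin.cons ((l + p + 3 : ℕ) : ℝ) (Fin.cons ((p + 2 : ℕ) : ℝ) (spinRhoB p)) := by
    ext i
    refine Fin.cases ?_ (Fin.cases ?_ fun j => ?_) i
    · simp only [f, lam, δ, Fin.cons_zero, Fin.val_zero, if_pos]; push_cast; ring
    · simp only [f, lam, δ, Fin.succ_zero_eq_one, Fin.cons_one, Fin.cons_zero, Fin.val_one,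
        one_ne_zero, if_false, if_true]
      push_cast; ring
    · simp only [f, lam, δ, spinRhoB, Fin.cons_succ, Fin.val_succ, add_eq_zero, one_ne_zero,
        and_false, if_false]
      push_cast; ring
  rw [prod_ratio_eq_div_weylProductB, hf, show δ = rhoB (p + 2) from rfl,
    weylProductB_cons_cons_spinRhoB_div_rhoB]
  simp only [n]
  push_cast
  ring
end

section
/- Let m ≥ 3, n = 2m−1, l ≥ 0 an integer, and σ ∈ {+1, −1}. In ℝ^m with the standard inner product, set δ = (m−1, m−2, …, 1, 0) (i.e. δ_i = m−i) and λ = (l+3/2, 3/2, 1/2, …, 1/2, σ·1/2) (first entry l+3/2, second entry 3/2, entries 3 through m−1 equal to 1/2, last entry σ/2). Then the Weyl dimension product over the positive roots of D_m, namely ∏_{1≤i<j≤m} [⟨λ+δ, e_i−e_j⟩·⟨λ+δ, e_i+e_j⟩ / (⟨δ, e_i−e_j⟩·⟨δ, e_i+e_j⟩)], equals 2^{m−1} · (n−2) · [(l+n+1)(l+1) / ((l+n)(l+2))] · C(l+n, l+1), where C denotes the binomial coefficient and e_1, …, e_m is the standard basis of ℝ^m. -/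
/-!
With `m = p + 3`, the vector `λ + δ` is `(l + p + 7/2, p + 5/2, p + 1/2, p - 1/2, …, 3/2, σ/2)`,
and the Weyl product only sees squares of coordinates, so `σ` drops out. Peeling off the first two
coordinates (the roots `e_1 ± e_j` and `e_2 ± e_j`) leaves the Weyl product of the weight
`(1/2, …, 1/2)` of `D_{p+1}`, which is `2^p`. In each peeled row every factor
`⟨λ+δ, e_i ∓ e_j⟩` and `⟨δ, e_i ∓ e_j⟩` runs through consecutive integers as `j` varies, so the
rows are quotients of factorials, and the claim becomes an identity between factorials.
-/

open Finset Nat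

section WeylProduct

variable {K : Type*} [Field K]

/-- Weyl's dimension product for `D_m`, with `x = λ + δ` and `ρ = δ` in the coordinates `e_i`;
the pairs `i < j` index the positive roots `e_i ± e_j`. -/
def weylProductD {m : ℕ} (x ρ : Fin m → K) : K :=
  ∏ i, ∏ j, if i < j then ((x i - x j) * (x i + x j)) / ((ρ i - ρ j) * (ρ i + ρ j)) else 1

theorem weylProductD_cons {m : ℕ} (x₀ ρ₀ : K) (x ρ : Fin m → K) :
    weylProductD (Fin.cons x₀ x : Fin (m + 1) → K) (Fin.cons ρ₀ ρ) =
      (∏ j, ((x₀ - x j) * (x₀ + x j)) / ((ρ₀ - ρ j) * (ρ₀ + ρ j))) * weylProductD x ρ := by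
  simp only [weylProductD, Fin.prod_univ_succ (n := m), Fin.succ_pos, if_true, if_false, one_mul,
    Fin.not_lt_zero, Fin.succ_lt_succ_iff, Fin.cons_zero, Fin.cons_succ]

theorem weylProductD_congr_sq {m : ℕ} {x y : Fin m → K} (ρ : Fin m → K)
    (h : ∀ i, x i ^ 2 = y i ^ 2) : weylProductD x ρ = weylProductD y ρ := by
  have hxy : ∀ i j, (x i - x j) * (x i + x j) = (y i - y j) * (y i + y j) := fun i j => by
    linear_combination h i - h j
  simp only [weylProductD, hxy]

end WeylProduct

theorem prod_range_add_one_add_eq_factorial_div (a n : ℕ) :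
    ∏ k ∈ range n, ((a : ℝ) + 1 + k) = (a + n)! / a ! := by
  induction n with
  | zero => simp [div_self (by positivity : (a ! : ℝ) ≠ 0)]
  | succ n ih =>
    rw [prod_range_succ, ih, ← add_assoc, factorial_succ]
    push_cast
    ring

theorem prod_range_add_sub_eq_factorial_div (a n : ℕ) :
    ∏ k ∈ range n, ((a : ℝ) + n - k) = (a + n)! / a ! := by
  rw [← prod_range_add_one_add_eq_factorial_div, ← prod_range_reflect]
  refine prod_congr rfl fun k hk => ?_
  rw [show n - 1 - k = n - (k + 1) by omega, Nat.cast_sub (mem_range.1 hk)]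
  push_cast
  ring

theorem prod_weylRow_eq_factorial_div (a c n : ℕ) {A E : ℝ} (hA : A = a + n + 3 / 2)
    (hE : E = c + n + 1) :
    ∏ k : Fin (n + 1), ((A - (n - k + 1 / 2)) * (A + (n - k + 1 / 2))) / ((E - (n - k)) * (E + (n - k)))
      = (a + 2 * n + 2)! / a ! / ((c + n + 1)! / c ! * ((c + 2 * n + 1)! / (c + n)!)) := by
  have hnum : ∀ k : ℕ, (A - (n - k + 1 / 2)) * (A + (n - k + 1 / 2)) =
      ((a : ℝ) + 1 + k) * (((a + n + 1 : ℕ) : ℝ) + (n + 1 : ℕ) - k) := fun k => by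
    subst hA; push_cast; ring
  have hden : ∀ k : ℕ, (E - (n - k)) * (E + (n - k)) =
      ((c : ℝ) + 1 + k) * (((c + n : ℕ) : ℝ) + (n + 1 : ℕ) - k) := fun k => by
    subst hE; push_cast; ring
  rw [Fin.prod_univ_eq_prod_range (fun k : ℕ =>
    ((A - (n - k + 1 / 2)) * (A + (n - k + 1 / 2))) / ((E - (n - k)) * (E + (n - k))))]
  simp only [hnum, hden, prod_div_distrib, prod_mul_distrib, prod_range_add_one_add_eq_factorial_div,
    prod_range_add_sub_eq_factorial_div]
  rw [show a + n + 1 + (n + 1) = a + 2 * n + 2 by ring, show c + n + (n + 1) = c + 2 * n + 1 by ring,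
    ← add_assoc, ← add_assoc]
  field_simp

-- `(1/2, …, 1/2)` is the highest weight of a half-spin representation of `D_{k+1}`.
theorem weylProductD_halfShift (k : ℕ) :
    weylProductD (fun i : Fin (k + 1) => (k : ℝ) - i + 1 / 2) (fun i => (k : ℝ) - i) = 2 ^ k := by
  induction k with
  | zero => simp [weylProductD]
  | succ k ih =>
    have hx : (fun i : Fin (k + 2) => ((k + 1 : ℕ) : ℝ) - i + 1 / 2) =
        Fin.cons ((k : ℝ) + 3 / 2) fun i : Fin (k + 1) => (k : ℝ) - i + 1 / 2 := by
      funext i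
      refine Fin.cases ?_ (fun i => ?_) i <;>
        simp only [Fin.cons_zero, Fin.cons_succ, Fin.val_zero, Fin.val_succ] <;> push_cast <;> ring
    have hρ : (fun i : Fin (k + 2) => ((k + 1 : ℕ) : ℝ) - i) =
        Fin.cons ((k : ℝ) + 1) fun i : Fin (k + 1) => (k : ℝ) - i := by
      funext i
      refine Fin.cases ?_ (fun i => ?_) i <;>
        simp only [Fin.cons_zero, Fin.cons_succ, Fin.val_zero, Fin.val_succ] <;> push_cast <;> ring
    rw [hx, hρ, weylProductD_cons, ih, prod_weylRow_eq_factorial_div 0 0 k (by simp) (by simp)]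
    simp only [add_right_comm _ 1, zero_add, factorial_succ, factorial_zero]
    push_cast
    field_simp
    ring

theorem weylProductD_kerPstarWeight (l p : ℕ) :
    weylProductD (Fin.cons ((l : ℝ) + p + 7 / 2) (Fin.cons ((p : ℝ) + 5 / 2)
        fun i : Fin (p + 1) => (p : ℝ) - i + 1 / 2))
      (Fin.cons ((p : ℝ) + 2) (Fin.cons ((p : ℝ) + 1) fun i : Fin (p + 1) => (p : ℝ) - i)) =
    2 ^ (p + 2) * (2 * p + 3) * (((l : ℝ) + 2 * p + 6) * (l + 1) / ((l + 2 * p + 5) * (l + 2))) *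
      ((l + 1 + (2 * p + 4)).choose (l + 1) : ℝ) := by
  rw [weylProductD_cons, weylProductD_cons, Fin.prod_univ_succ, weylProductD_halfShift]
  simp only [Fin.cons_zero, Fin.cons_succ]
  rw [prod_weylRow_eq_factorial_div (l + 2) 1 p (by push_cast; ring) (by push_cast; ring),
    prod_weylRow_eq_factorial_div 1 0 p (by push_cast; ring) (by push_cast; ring), cast_add_choose]
  -- Moving every `+ 1` outward lets `factorial_succ` reduce all factorials to
  -- `(l + 2 * p)!`, `l !`, `(2 * p)!` and `p !`.
  simp only [← add_assoc, add_right_comm _ 1, zero_add, factorial_succ, factorial_zero]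
  push_cast
  field_simp
  ring

/-- Weyl dimension formula for `so(2m)` (type `D_m`) with highest weight
`λ = (l+3/2, 3/2, (1/2)_{m-3}, ±1/2)` and `δ = (m-1, m-2, …, 0)`: the product over the
positive roots equals `2^{m-1} · (n-2) · ((l+n+1)(l+1)/((l+n)(l+2))) · C(l+n, l+1)`
with `n = 2m-1`. -/
theorem sphere_multiplicity_kerPstar_odd (m l : ℕ) (hm : 3 ≤ m) (σ : ℝ) (hσ : σ = 1 ∨ σ = -1) :
    let n : ℝ := 2 * m - 1
    let δ : Fin m → ℝ := fun i => (m : ℝ) - 1 - (i : ℕ)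
    let lam : Fin m → ℝ := fun i =>
      if (i : ℕ) = 0 then (l : ℝ) + 3 / 2
      else if (i : ℕ) = 1 then 3 / 2
      else if (i : ℕ) = m - 1 then σ / 2
      else 1 / 2
    let f : Fin m → ℝ := fun i => lam i + δ i
    (∏ i, ∏ j, if i < j then
        ((f i - f j) * (f i + f j)) / ((δ i - δ j) * (δ i + δ j)) else 1)
      = 2 ^ (m - 1) * (n - 2) * (((l : ℝ) + n + 1) * ((l : ℝ) + 1) / ((((l : ℝ) + n)) * ((l : ℝ) + 2)))
        * (Nat.choose (l + (2 * m - 1)) (l + 1) : ℝ) := by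
  intro n δ lam f
  obtain ⟨p, rfl⟩ : ∃ p, m = p + 3 := ⟨m - 3, by omega⟩
  have hσ_sq : σ ^ 2 = 1 := by rcases hσ with rfl | rfl <;> norm_num
  have hf : ∀ i, f i ^ 2 = (Fin.cons ((l : ℝ) + p + 7 / 2) (Fin.cons ((p : ℝ) + 5 / 2)
      fun i : Fin (p + 1) => (p : ℝ) - i + 1 / 2) : Fin (p + 3) → ℝ) i ^ 2 := by
    intro i
    refine Fin.cases ?_ (Fin.cases ?_ fun k => ?_) i <;>
      simp only [f, lam, δ, Fin.cons_zero, Fin.cons_succ, Fin.succ_zero_eq_one, Fin.cons_one,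
        Fin.val_zero, Fin.val_one, Fin.val_succ] <;> grind
  have hδ : δ = Fin.cons ((p : ℝ) + 2) (Fin.cons ((p : ℝ) + 1) fun i : Fin (p + 1) => (p : ℝ) - i) := by
    funext i
    refine Fin.cases ?_ (Fin.cases ?_ fun k => ?_) i <;>
      simp only [δ, Fin.cons_zero, Fin.cons_succ, Fin.succ_zero_eq_one, Fin.cons_one, Fin.val_zero,
        Fin.val_one, Fin.val_succ] <;> push_cast <;> ring
  change weylProductD f δ = _
  rw [weylProductD_congr_sq δ hf, hδ, weylProductD_kerPstarWeight,
    show l + (2 * (p + 3) - 1) = l + 1 + (2 * p + 4) by omega]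
  simp only [n]
  push_cast
  ring
end

section
/- Let n ≥ 3 be odd, let k, ε, l be integers with 1 ≤ k ≤ n−1, ε ∈ {0,1} and l ≥ max{ε, −(n−1)/2 + k}. In ℝ^n define the bilinear form B(x,y) = Σ_i x_i y_i − (Σ_i x_i)(Σ_i y_i)/(n+1), set ρ = (2n, 2(n−1), …, 2) (i.e. ρ_i = 2(n+1−i)), and let λ = λ(k,ε,l) be the vector with first entry (n+1)/2 − k + 2l − ε, followed by n−k−1 entries equal to (n+1)/2 − k + l, then one entry equal to (n−1)/2 − k + l + ε, then k−1 entries equal to (n−1)/2 − k + l. Then B(λ+ρ, λ) + n(n+1)/4 = (l+n−k)(2l+n+1−2ε). -/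
/-! The weight `λ(k,ε,l)` is constant on the index blocks `{0}`, `[1, n-k)`, `{n-k}` and
`[n-k+1, n)`, while `ρ` is affine in the index, so every sum entering `B(λ+ρ, λ)` is a sum of
arithmetic progressions over these blocks. What is left is a polynomial identity in `n, k, l, ε`,
which holds once `ε² = ε`. -/

open Finset

theorem Finset.sum_range_eq_add_sum_Ico_add_add_sum_Ico {M : Type*} [AddCommMonoid M]
    (f : ℕ → M) {m n : ℕ} (hm : 0 < m) (hmn : m < n) :
    ∑ i ∈ range n, f i = f 0 + ∑ i ∈ Ico 1 m, f i + f m + ∑ i ∈ Ico (m + 1) n, f i := by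
  rw [range_eq_Ico, ← sum_Ico_consecutive f hm.le hmn.le, sum_eq_sum_Ico_succ_bot hm,
    sum_eq_sum_Ico_succ_bot hmn, zero_add]
  simp only [add_assoc]

theorem Finset.sum_Ico_affine {K : Type*} [Field K] [CharZero K] {s t : ℕ} (hst : s ≤ t)
    (p q : K) :
    ∑ i ∈ Ico s t, (p + q * i) = (t - s) * (p + q * (s + t - 1) / 2) := by
  induction t, hst using Nat.le_induction with
  | base => simp
  | succ t hst ih =>
    rw [sum_Ico_succ_top hst, ih]
    push_cast
    ring

noncomputable section

namespace CPn

variable (n k ε l : ℕ)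

def twoDelta (i : ℕ) : ℝ := 2 * ((n : ℝ) + 1 - ((i : ℝ) + 1))

def weight (i : ℕ) : ℝ :=
  if i = 0 then ((n : ℝ) + 1) / 2 - k + 2 * l - ε
  else if i + k < n then ((n : ℝ) + 1) / 2 - k + l
  else if i + k = n then ((n : ℝ) - 1) / 2 - k + l + ε
  else ((n : ℝ) - 1) / 2 - k + l

variable {n k}

theorem weight_of_mem_Ico_one {i : ℕ} (hi : i ∈ Ico 1 (n - k)) :
    weight n k ε l i = ((n : ℝ) + 1) / 2 - k + l := by
  rw [mem_Ico] at hi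
  rw [weight, if_neg (by omega), if_pos (by omega)]

theorem weight_sub (hkn : k < n) :
    weight n k ε l (n - k) = ((n : ℝ) - 1) / 2 - k + l + ε := by
  rw [weight, if_neg (by omega), if_neg (by omega), if_pos (by omega)]

theorem weight_of_mem_Ico_sub_add_one {i : ℕ} (hi : i ∈ Ico (n - k + 1) n) :
    weight n k ε l i = ((n : ℝ) - 1) / 2 - k + l := by
  rw [mem_Ico] at hi
  rw [weight, if_neg (by omega), if_neg (by omega), if_neg (by omega)]

theorem sum_mul_weight (hk : 1 ≤ k) (hkn : k < n) (g : ℕ → ℝ) :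
    ∑ i ∈ range n, g i * weight n k ε l i =
      g 0 * (((n : ℝ) + 1) / 2 - k + 2 * l - ε)
        + (∑ i ∈ Ico 1 (n - k), g i) * (((n : ℝ) + 1) / 2 - k + l)
        + g (n - k) * (((n : ℝ) - 1) / 2 - k + l + ε)
        + (∑ i ∈ Ico (n - k + 1) n, g i) * (((n : ℝ) - 1) / 2 - k + l) := by
  have middle : ∑ i ∈ Ico 1 (n - k), g i * weight n k ε l i
      = (∑ i ∈ Ico 1 (n - k), g i) * (((n : ℝ) + 1) / 2 - k + l) := by
    rw [sum_mul]
    exact sum_congr rfl fun i hi => by rw [weight_of_mem_Ico_one ε l hi]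
  have tail : ∑ i ∈ Ico (n - k + 1) n, g i * weight n k ε l i
      = (∑ i ∈ Ico (n - k + 1) n, g i) * (((n : ℝ) - 1) / 2 - k + l) := by
    rw [sum_mul]
    exact sum_congr rfl fun i hi => by rw [weight_of_mem_Ico_sub_add_one ε l hi]
  rw [sum_range_eq_add_sum_Ico_add_add_sum_Ico _ (m := n - k) (by omega) (by omega),
    middle, tail, weight_sub ε l hkn, weight, if_pos rfl]

theorem sum_weight (hk : 1 ≤ k) (hkn : k < n) :
    ∑ i ∈ range n, weight n k ε l i = n * (((n : ℝ) + 1) / 2 - k + l) + l - k := by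
  have h := sum_mul_weight ε l hk hkn fun _ => 1
  simp only [one_mul, sum_const, Nat.card_Ico, nsmul_eq_mul, mul_one] at h
  rw [h, show n - k - 1 = n - (k + 1) by omega, show n - (n - k + 1) = k - 1 by omega,
    Nat.cast_sub hkn, Nat.cast_sub hk]
  push_cast
  ring

theorem twoDelta_eq (i : ℕ) : twoDelta n i = 2 * n + (-2) * i := by
  rw [twoDelta]
  ring

theorem sum_twoDelta : ∑ i ∈ range n, twoDelta n i = n * (n + 1) := by
  simp only [twoDelta_eq, range_eq_Ico, sum_Ico_affine (Nat.zero_le n)]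
  push_cast
  ring

theorem sum_weight_add_twoDelta_mul_weight (hk : 1 ≤ k) (hkn : k < n) :
    ∑ i ∈ range n, (weight n k ε l i + twoDelta n i) * weight n k ε l i =
      (((n : ℝ) + 1) / 2 - k + 2 * l - ε) * (((n : ℝ) + 1) / 2 - k + 2 * l - ε + 2 * n)
        + (n - k - 1) * (((n : ℝ) + 1) / 2 - k + l) * (((n : ℝ) + 1) / 2 + n + l)
        + (((n : ℝ) - 1) / 2 - k + l + ε) * (((n : ℝ) - 1) / 2 + k + l + ε)
        + (k - 1) * (((n : ℝ) - 1) / 2 - k + l) * (((n : ℝ) - 1) / 2 + l) := by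
  have hcast : ((n - k : ℕ) : ℝ) = n - k := Nat.cast_sub hkn.le
  have middle : ∑ i ∈ Ico 1 (n - k), (weight n k ε l i + twoDelta n i)
      = (n - k - 1) * (((n : ℝ) + 1) / 2 + n + l) := by
    rw [sum_congr rfl fun i hi => by
        rw [weight_of_mem_Ico_one ε l hi, twoDelta_eq, ← add_assoc],
      sum_Ico_affine (by omega), hcast]
    push_cast
    ring
  have tail : ∑ i ∈ Ico (n - k + 1) n, (weight n k ε l i + twoDelta n i)
      = (k - 1) * (((n : ℝ) - 1) / 2 + l) := by
    rw [sum_congr rfl fun i hi => by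
        rw [weight_of_mem_Ico_sub_add_one ε l hi, twoDelta_eq, ← add_assoc],
      sum_Ico_affine (by omega), Nat.cast_add, hcast]
    push_cast
    ring
  rw [sum_mul_weight ε l hk hkn, middle, tail, weight_sub ε l hkn, twoDelta_eq, twoDelta_eq,
    weight, if_pos rfl, hcast]
  push_cast
  ring

end CPn

end

open CPn in
theorem cpn_dirac_eigenvalue_general (n k ε l : ℕ)
    (hk1 : 1 ≤ k) (hk2 : k ≤ n - 1) (hε : ε = 0 ∨ ε = 1) :
    let ρ : Fin n → ℝ := fun i => 2 * ((n : ℝ) + 1 - ((i : ℕ) + 1))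
    let lam : Fin n → ℝ := fun i =>
      if (i : ℕ) = 0 then ((n : ℝ) + 1) / 2 - k + 2 * l - ε
      else if (i : ℕ) + k < n then ((n : ℝ) + 1) / 2 - k + l
      else if (i : ℕ) + k = n then ((n : ℝ) - 1) / 2 - k + l + ε
      else ((n : ℝ) - 1) / 2 - k + l
    let B : (Fin n → ℝ) → (Fin n → ℝ) → ℝ := fun x y =>
      (∑ i, x i * y i) - (∑ i, x i) * (∑ i, y i) / ((n : ℝ) + 1)
    B (fun i => lam i + ρ i) lam + (n : ℝ) * ((n : ℝ) + 1) / 4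
      = ((l : ℝ) + n - k) * (2 * l + (n : ℝ) + 1 - 2 * ε) := by
  intro ρ lam B
  have hkn : k < n := by omega
  have hlam (i : Fin n) : lam i = weight n k ε l i := rfl
  have hρ (i : Fin n) : ρ i = twoDelta n i := rfl
  simp only [B, hlam, hρ, Fin.sum_univ_eq_sum_range (fun i => weight n k ε l i),
    Fin.sum_univ_eq_sum_range (fun i => weight n k ε l i + twoDelta n i),
    Fin.sum_univ_eq_sum_range (fun i => (weight n k ε l i + twoDelta n i) * weight n k ε l i)]
  rw [sum_weight_add_twoDelta_mul_weight ε l hk1 hkn, sum_add_distrib, sum_weight ε l hk1 hkn,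
    sum_twoDelta]
  have hn : (n : ℝ) + 1 ≠ 0 := by positivity
  -- the identity needs `ε² = ε`
  rcases hε with rfl | rfl <;> push_cast <;> field_simp <;> ring

/-- On `ℂP^n = SU(n+1)/S(U(n)×U(1))` with `n` odd, Freudenthal's formula for the highest
weight `λ(k,ε,l)` of an irreducible summand of `L²(S_{1/2}(k))`, `1 ≤ k ≤ n-1`:
`B(λ+ρ, λ) + n(n+1)/4 = (l+n-k)(2l+n+1-2ε)`, where `B` is the Killing-form inner product
with `⟨e_i,e_j⟩ = δ_ij - 1/(n+1)` and `ρ = 2δ_{SU(n+1)} = (2n, 2(n-1), …, 2)`. -/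
theorem cpn_dirac_eigenvalue (n k ε l : ℕ) (hn : Odd n) (hn3 : 3 ≤ n)
    (hk1 : 1 ≤ k) (hk2 : k ≤ n - 1) (hε : ε = 0 ∨ ε = 1)
    (hl1 : ε ≤ l) (hl2 : (k : ℤ) - ((n : ℤ) - 1) / 2 ≤ (l : ℤ)) :
    let ρ : Fin n → ℝ := fun i => 2 * ((n : ℝ) + 1 - ((i : ℕ) + 1))
    let lam : Fin n → ℝ := fun i =>
      if (i : ℕ) = 0 then ((n : ℝ) + 1) / 2 - k + 2 * l - ε
      else if (i : ℕ) + k < n then ((n : ℝ) + 1) / 2 - k + l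
      else if (i : ℕ) + k = n then ((n : ℝ) - 1) / 2 - k + l + ε
      else ((n : ℝ) - 1) / 2 - k + l
    let B : (Fin n → ℝ) → (Fin n → ℝ) → ℝ := fun x y =>
      (∑ i, x i * y i) - (∑ i, x i) * (∑ i, y i) / ((n : ℝ) + 1)
    B (fun i => lam i + ρ i) lam + (n : ℝ) * ((n : ℝ) + 1) / 4
      = ((l : ℝ) + n - k) * (2 * l + (n : ℝ) + 1 - 2 * ε) :=
  cpn_dirac_eigenvalue_general n k ε l hk1 hk2 hε
end

section
/- Let n ≥ 2, let m ≥ 1, l ≥ 0 and ε ∈ {−3, −1, 1, 3} be integers with l + ε ≥ 0 and n − 1 − l − ε ≥ 0. In ℝ^{n+1} define the bilinear form B(x,y) = (1/(4(n+2))) Σ_i x_i y_i, set ρ = (2(n+1), 2n, …, 2) (i.e. ρ_i = 2(n+2−i)), and let λ = λ(m,l,ε) be the vector with first entry m+l, second entry m, followed by n−1−l−ε entries equal to 1 and l+ε entries equal to 0. Then B(λ+ρ, λ) + (n−2)/4 = (1/(2(n+2))) [ (n+m−ε)(n+m+l+1+ε) − (n + 1/2) + (1/2)(ε−2)(ε+2)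 ]. -/
/-!
The two leading entries of `λ` contribute `(m+l)(m+l+2n+2) + m(m+2n)` to `⟨λ+ρ, λ⟩`, and the
`s = n-1-l-ε` entries equal to `1` contribute the odd numbers `2n-1, 2n-3, …`, which sum to
`s(2n-s)`. After substituting `ε = n-1-l-s` both sides are polynomials in `n, m, l, s` and agree.
-/

open Finset

lemma sum_range_ite_lt {M : Type*} [AddCommMonoid M] {s k : ℕ} (hs : s ≤ k) (g : ℕ → M) :
    ∑ j ∈ range k, (if j < s then g j else 0) = ∑ j ∈ range s, g j := by
  rw [← sum_filter]
  congr 1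
  ext j
  simp only [mem_filter, mem_range]
  omega

lemma sum_range_two_mul_sub_one_sub_two_mul {R : Type*} [CommRing R] (a : R) (s : ℕ) :
    ∑ j ∈ range s, (2 * a - 1 - 2 * j) = s * (2 * a - s) := by
  induction s with
  | zero => simp
  | succ s ih =>
    rw [sum_range_succ, ih]
    push_cast
    ring

theorem hpn_rs_eigenvalue_general (n m l : ℕ) (ε : ℤ)
    (h1 : 0 ≤ (l : ℤ) + ε) (h2 : (l : ℤ) + ε ≤ (n : ℤ) - 1) :
    let ρ : Fin (n + 1) → ℝ := fun i => 2 * ((n : ℝ) + 2 - ((i : ℕ) + 1))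
    let lam : Fin (n + 1) → ℝ := fun i =>
      if (i : ℕ) = 0 then (m : ℝ) + l
      else if (i : ℕ) = 1 then (m : ℝ)
      else if ((i : ℕ) : ℤ) + l + ε ≤ (n : ℤ) then 1
      else 0
    let B : (Fin (n + 1) → ℝ) → (Fin (n + 1) → ℝ) → ℝ := fun x y =>
      (1 / (4 * ((n : ℝ) + 2))) * ∑ i, x i * y i
    B (fun i => lam i + ρ i) lam + ((n : ℝ) - 2) / 4
      = (1 / (2 * ((n : ℝ) + 2))) * (((n : ℝ) + m - ε) * ((n : ℝ) + m + l + 1 + ε)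
          - ((n : ℝ) + 1 / 2) + (1 / 2) * ((ε : ℝ) - 2) * ((ε : ℝ) + 2)) := by
  obtain ⟨k, rfl⟩ : ∃ k, n = k + 1 := ⟨n - 1, by omega⟩
  obtain ⟨s, hs⟩ : ∃ s : ℕ, (s : ℤ) = k - l - ε := ⟨(k - l - ε).toNat, by omega⟩
  intro ρ lam B
  have htail : ∀ j : Fin k, (lam j.succ.succ + ρ j.succ.succ) * lam j.succ.succ
      = if (j : ℕ) < s then 2 * ((k : ℝ) + 1) - 1 - 2 * (j : ℕ) else 0 := by
    intro j
    have hcond : (((j : ℕ) + 1 + 1 : ℕ) : ℤ) + l + ε ≤ ((k + 1 : ℕ) : ℤ) ↔ (j : ℕ) < s := by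
      omega
    have hne : (j : ℕ) + 1 + 1 ≠ 1 := by omega
    simp only [lam, ρ, Fin.val_succ, Nat.add_one_ne_zero, hne, hcond, if_false]
    split_ifs <;> push_cast <;> ring
  have hsum : ∑ i, (lam i + ρ i) * lam i = ((m : ℝ) + l + 2 * (k + 2)) * (m + l)
      + ((m : ℝ) + 2 * (k + 1)) * m + s * (2 * ((k : ℝ) + 1) - s) := by
    rw [Fin.sum_univ_succ, Fin.sum_univ_succ, sum_congr rfl fun j _ => htail j,
      Fin.sum_univ_eq_sum_range (fun j => if j < s then 2 * ((k : ℝ) + 1) - 1 - 2 * j else 0),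
      sum_range_ite_lt (by omega), sum_range_two_mul_sub_one_sub_two_mul]
    simp only [lam, ρ, Fin.succ_zero_eq_one, Fin.val_zero, Fin.val_one, one_ne_zero, if_true,
      if_false]
    push_cast
    ring
  have hε : (ε : ℝ) = k - l - s := by exact_mod_cast (by omega : ε = k - l - s)
  simp only [B, hsum, hε]
  field_simp
  push_cast
  ring

/-- On `ℍP^n = Sp(n+1)/(Sp(1)×Sp(n))`, Freudenthal's formula for the highest weight
`λ(m,l,ε) = (m+l, m, 1_{n-1-l-ε}, 0_{l+ε})` of an irreducible summand of
`Ker P* ⊂ L²(S_{3/2})`: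
`B(λ+ρ, λ) + (n-2)/4 = ((n+m-ε)(n+m+l+1+ε) - (n+1/2) + (ε-2)(ε+2)/2)/(2(n+2))`. -/
theorem hpn_rs_eigenvalue (n m l : ℕ) (ε : ℤ) (hn : 2 ≤ n) (hm : 1 ≤ m)
    (hε : ε = -3 ∨ ε = -1 ∨ ε = 1 ∨ ε = 3)
    (h1 : 0 ≤ (l : ℤ) + ε) (h2 : (l : ℤ) + ε ≤ (n : ℤ) - 1) :
    let ρ : Fin (n + 1) → ℝ := fun i => 2 * ((n : ℝ) + 2 - ((i : ℕ) + 1))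
    let lam : Fin (n + 1) → ℝ := fun i =>
      if (i : ℕ) = 0 then (m : ℝ) + l
      else if (i : ℕ) = 1 then (m : ℝ)
      else if ((i : ℕ) : ℤ) + l + ε ≤ (n : ℤ) then 1
      else 0
    let B : (Fin (n + 1) → ℝ) → (Fin (n + 1) → ℝ) → ℝ := fun x y =>
      (1 / (4 * ((n : ℝ) + 2))) * ∑ i, x i * y i
    B (fun i => lam i + ρ i) lam + ((n : ℝ) - 2) / 4
      = (1 / (2 * ((n : ℝ) + 2))) * (((n : ℝ) + m - ε) * ((n : ℝ) + m + l + 1 + ε)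
          - ((n : ℝ) + 1 / 2) + (1 / 2) * ((ε : ℝ) - 2) * ((ε : ℝ) + 2)) :=
  hpn_rs_eigenvalue_general n m l ε h1 h2
end
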